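/- Let u be a utility function assigning a nonnegative real u(S,E) to each subset S of projects and budgeting scenario E, satisfying u(∅,E)=0 and cost consistency (for every E there is k>0 with u({a},E)=k·c(a) for all projects a). Consider E=(A,V,c,l) with A={x_1,x_2,x_3}, c(x_1)=1, c(x_2)=2, c(x_3)=3, l=4, and two voters: voter 1 approves {x_1,x_2} and voter 2 approves {x_3}. Then {x_1,x_3} is the unique feasible bundle maximizing min_{i∈V} u(A_i ∩ B, E), and also the unique feasible bundle maximizing Π_{i∈V} u(A_i ∩ B, E); and in E'=(A,V,c,5) (no project costs exactly 5), the unique min-optimal bundle and the unique prod-optimal bundle is {x_2,x_3}, which does not contain x_1. Consequently, every budgeting method that always returns a min-optimal (or prod-optimal) feasible bundle (with respect to u) violates limit monotonicity. -/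

import Mathlib

open Finset

/-- A participatory budgeting scenario `E = (A, V, c, l)`. -/
structure Scenario (α ι : Type*) [DecidableEq α] where
  projects : Finset α
  voters : Finset ι
  voters_nonempty : voters.Nonempty
  cost : α → ℕ
  budget : ℕ
  approval : ι → Finset α
  approval_subset : ∀ i ∈ voters, approval i ⊆ projects
  approval_feasible : ∀ i ∈ voters, ∑ a ∈ approval i, cost a ≤ budget

variable {α ι : Type*} [DecidableEq α]

/-- A bundle is feasible if it consists of projects and fits in the budget. -/
def Feasible (E : Scenario α ι) (B : Finset α) : Prop :=
  B ⊆ E.projects ∧ ∑ a ∈ B, E.cost a ≤ E.budget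

/-- The minimum over all voters of the satisfaction `u (Aᵢ ∩ B)`. -/
noncomputable def minScore (E : Scenario α ι) (u : Finset α → ℝ) (B : Finset α) : ℝ :=
  E.voters.inf' E.voters_nonempty (fun i => u (E.approval i ∩ B))

/-- A feasible bundle maximizing the minimum of voters' satisfactions. -/
def IsMinOptimal (E : Scenario α ι) (u : Finset α → ℝ) (B : Finset α) : Prop :=
  Feasible E B ∧ ∀ C, Feasible E C → minScore E u C ≤ minScore E u B

/-- The product over all voters of the satisfaction `u (Aᵢ ∩ B)`. -/
noncomputable def prodScore (E : Scenario α ι) (u : Finset α → ℝ) (B : Finset α) : ℝ :=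
  ∏ i ∈ E.voters, u (E.approval i ∩ B)

/-- A feasible bundle maximizing the product of voters' satisfactions. -/
def IsProdOptimal (E : Scenario α ι) (u : Finset α → ℝ) (B : Finset α) : Prop :=
  Feasible E B ∧ ∀ C, Feasible E C → prodScore E u C ≤ prodScore E u B

/-- A budgeting method `r` satisfies limit monotonicity if, whenever the budget limit is
increased by `1` (and no project costs exactly the new limit), every funded project
remains funded. -/
def LimitMonotone (r : Scenario α ι → Finset α) : Prop :=
  ∀ E E' : Scenario α ι,
    E'.projects = E.projects → E'.voters = E.voters → E'.cost = E.cost →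
    E'.approval = E.approval → E'.budget = E.budget + 1 →
    (∀ a ∈ E.projects, E.cost a ≠ E.budget + 1) →
    r E ⊆ r E'

/-- The scenario `E`: projects `x₁ = 0`, `x₂ = 1`, `x₃ = 2` of costs `1, 2, 3`,
budget `4`; voter `0` approves `{x₁, x₂}` and voter `1` approves `{x₃}`. -/
def Elim2 : Scenario (Fin 3) (Fin 2) where
  projects := {0, 1, 2}
  voters := Finset.univ
  voters_nonempty := ⟨0, Finset.mem_univ 0⟩
  cost := ![1, 2, 3]
  budget := 4
  approval := fun i => if i = 0 then {0, 1} else {2}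
  approval_subset := by decide
  approval_feasible := by decide

/-- The scenario `E'`: as `E`, with budget limit `5` instead of `4`. -/
def Elim2' : Scenario (Fin 3) (Fin 2) where
  projects := {0, 1, 2}
  voters := Finset.univ
  voters_nonempty := ⟨0, Finset.mem_univ 0⟩
  cost := ![1, 2, 3]
  budget := 5
  approval := fun i => if i = 0 then {0, 1} else {2}
  approval_subset := by decide
  approval_feasible := by decide

lemma msEq (E : Scenario (Fin 3) (Fin 2)) (hE : E.voters = Finset.univ)
    (f : Finset (Fin 3) → ℝ) (B : Finset (Fin 3)) :
    minScore E f B = min (f (E.approval 0 ∩ B)) (f (E.approval 1 ∩ B)) := by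
  refine le_antisymm (le_min ?_ ?_) ?_
  · exact Finset.inf'_le _ (by rw [hE]; exact Finset.mem_univ _)
  · exact Finset.inf'_le _ (by rw [hE]; exact Finset.mem_univ _)
  · refine Finset.le_inf' _ _ fun i _ => ?_
    fin_cases i
    · exact min_le_left _ _
    · exact min_le_right _ _

lemma psEq (E : Scenario (Fin 3) (Fin 2)) (hE : E.voters = Finset.univ)
    (f : Finset (Fin 3) → ℝ) (B : Finset (Fin 3)) :
    prodScore E f B = f (E.approval 0 ∩ B) * f (E.approval 1 ∩ B) := by
  rw [prodScore, hE, Fin.prod_univ_two]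

lemma a0 : Elim2.approval 0 = {0, 1} := by decide
lemma a1 : Elim2.approval 1 = {2} := by decide
lemma a0' : Elim2'.approval 0 = {0, 1} := by decide
lemma a1' : Elim2'.approval 1 = {2} := by decide

lemma feas2 : ∀ B : Finset (Fin 3), Feasible Elim2 B ↔
    (B = ∅ ∨ B = {0} ∨ B = {1} ∨ B = {2} ∨ B = {0, 1} ∨ B = {0, 2}) := by
  unfold Feasible; decide

lemma feas2' : ∀ B : Finset (Fin 3), Feasible Elim2' B ↔
    (B = ∅ ∨ B = {0} ∨ B = {1} ∨ B = {2} ∨ B = {0, 1} ∨ B = {0, 2} ∨ B = {1, 2}) := by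
  unfold Feasible; decide

lemma elim2_block (f : Finset (Fin 3) → ℝ) (hz : f ∅ = 0) (hn : ∀ S, 0 ≤ f S)
    (k : ℝ) (hk : 0 < k) (h0 : f {0} = k) (h2 : f {2} = 3 * k) :
    IsMinOptimal Elim2 f {0, 2} ∧ (∀ B, IsMinOptimal Elim2 f B → B = {0, 2}) ∧
    IsProdOptimal Elim2 f {0, 2} ∧ (∀ B, IsProdOptimal Elim2 f B → B = {0, 2}) := by
  have hfeas : Feasible Elim2 {0, 2} := (feas2 _).2 (by tauto)
  have hval : minScore Elim2 f {0, 2} = k := by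
    rw [msEq Elim2 rfl, a0, a1, show ({0,1} : Finset (Fin 3)) ∩ {0,2} = {0} by decide,
      show ({2} : Finset (Fin 3)) ∩ {0,2} = {2} by decide, h0, h2]
    exact min_eq_left (by linarith)
  have hother : ∀ C, Feasible Elim2 C → C ≠ {0, 2} → minScore Elim2 f C ≤ 0 := by
    intro C hC hne
    rcases (feas2 C).1 hC with rfl | rfl | rfl | rfl | rfl | rfl
    · rw [msEq Elim2 rfl, a0, a1]; simp [hz]
    · rw [msEq Elim2 rfl, a0, a1, show ({0,1} : Finset (Fin 3)) ∩ {0} = {0} by decide,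
        show ({2} : Finset (Fin 3)) ∩ {0} = ∅ by decide, hz]
      exact min_le_right _ _
    · rw [msEq Elim2 rfl, a0, a1, show ({0,1} : Finset (Fin 3)) ∩ {1} = {1} by decide,
        show ({2} : Finset (Fin 3)) ∩ {1} = ∅ by decide, hz]
      exact min_le_right _ _
    · rw [msEq Elim2 rfl, a0, a1, show ({0,1} : Finset (Fin 3)) ∩ {2} = ∅ by decide, hz]
      exact min_le_left _ _
    · rw [msEq Elim2 rfl, a0, a1, show ({2} : Finset (Fin 3)) ∩ {0,1} = ∅ by decide, hz]
      exact min_le_right _ _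
    · exact absurd rfl hne
  have hpval : prodScore Elim2 f {0, 2} = k * (3 * k) := by
    rw [psEq Elim2 rfl, a0, a1, show ({0,1} : Finset (Fin 3)) ∩ {0,2} = {0} by decide,
      show ({2} : Finset (Fin 3)) ∩ {0,2} = {2} by decide, h0, h2]
  have hpother : ∀ C, Feasible Elim2 C → C ≠ {0, 2} → prodScore Elim2 f C = 0 := by
    intro C hC hne
    rcases (feas2 C).1 hC with rfl | rfl | rfl | rfl | rfl | rfl
    · rw [psEq Elim2 rfl, a0, a1]; simp [hz]
    · rw [psEq Elim2 rfl, a0, a1, show ({2} : Finset (Fin 3)) ∩ {0} = ∅ by decide, hz,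
        mul_zero]
    · rw [psEq Elim2 rfl, a0, a1, show ({2} : Finset (Fin 3)) ∩ {1} = ∅ by decide, hz,
        mul_zero]
    · rw [psEq Elim2 rfl, a0, a1, show ({0,1} : Finset (Fin 3)) ∩ {2} = ∅ by decide, hz,
        zero_mul]
    · rw [psEq Elim2 rfl, a0, a1, show ({2} : Finset (Fin 3)) ∩ {0,1} = ∅ by decide, hz,
        mul_zero]
    · exact absurd rfl hne
  refine ⟨⟨hfeas, ?_⟩, ?_, ⟨hfeas, ?_⟩, ?_⟩
  · intro C hC
    by_cases hne : C = {0, 2}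
    · subst hne; exact le_refl _
    · exact le_trans (hother C hC hne) (by rw [hval]; linarith)
  · rintro B ⟨hBf, hBopt⟩
    by_contra hne
    have h1 := hBopt {0, 2} hfeas
    rw [hval] at h1
    have h2' := hother B hBf hne
    linarith
  · intro C hC
    by_cases hne : C = {0, 2}
    · subst hne; exact le_refl _
    · rw [hpother C hC hne, hpval]; nlinarith
  · rintro B ⟨hBf, hBopt⟩
    by_contra hne
    have h1 := hBopt {0, 2} hfeas
    rw [hpval, hpother B hBf hne] at h1
    nlinarith

lemma elim2'_block (f : Finset (Fin 3) → ℝ) (hz : f ∅ = 0) (hn : ∀ S, 0 ≤ f S)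
    (k : ℝ) (hk : 0 < k) (h0 : f {0} = k) (h1 : f {1} = 2 * k) (h2 : f {2} = 3 * k) :
    IsMinOptimal Elim2' f {1, 2} ∧ (∀ B, IsMinOptimal Elim2' f B → B = {1, 2}) ∧
    IsProdOptimal Elim2' f {1, 2} ∧ (∀ B, IsProdOptimal Elim2' f B → B = {1, 2}) := by
  have hfeas : Feasible Elim2' {1, 2} := (feas2' _).2 (by tauto)
  have hval : minScore Elim2' f {1, 2} = 2 * k := by
    rw [msEq Elim2' rfl, a0', a1', show ({0,1} : Finset (Fin 3)) ∩ {1,2} = {1} by decide,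
      show ({2} : Finset (Fin 3)) ∩ {1,2} = {2} by decide, h1, h2]
    exact min_eq_left (by linarith)
  have hother : ∀ C, Feasible Elim2' C → C ≠ {1, 2} → minScore Elim2' f C ≤ k := by
    intro C hC hne
    rcases (feas2' C).1 hC with rfl | rfl | rfl | rfl | rfl | rfl | rfl
    · rw [msEq Elim2' rfl, a0', a1']; simp [hz]; linarith
    · rw [msEq Elim2' rfl, a0', a1', show ({0,1} : Finset (Fin 3)) ∩ {0} = {0} by decide,
        show ({2} : Finset (Fin 3)) ∩ {0} = ∅ by decide, hz]
      exact le_trans (min_le_right _ _) (le_of_lt hk)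
    · rw [msEq Elim2' rfl, a0', a1', show ({0,1} : Finset (Fin 3)) ∩ {1} = {1} by decide,
        show ({2} : Finset (Fin 3)) ∩ {1} = ∅ by decide, hz]
      exact le_trans (min_le_right _ _) (le_of_lt hk)
    · rw [msEq Elim2' rfl, a0', a1', show ({0,1} : Finset (Fin 3)) ∩ {2} = ∅ by decide, hz]
      exact le_trans (min_le_left _ _) (le_of_lt hk)
    · rw [msEq Elim2' rfl, a0', a1', show ({2} : Finset (Fin 3)) ∩ {0,1} = ∅ by decide, hz]
      exact le_trans (min_le_right _ _) (le_of_lt hk)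
    · rw [msEq Elim2' rfl, a0', a1', show ({0,1} : Finset (Fin 3)) ∩ {0,2} = {0} by decide,
        show ({2} : Finset (Fin 3)) ∩ {0,2} = {2} by decide, h0, h2]
      exact min_le_left _ _
    · exact absurd rfl hne
  have hpval : prodScore Elim2' f {1, 2} = 2 * k * (3 * k) := by
    rw [psEq Elim2' rfl, a0', a1', show ({0,1} : Finset (Fin 3)) ∩ {1,2} = {1} by decide,
      show ({2} : Finset (Fin 3)) ∩ {1,2} = {2} by decide, h1, h2]
  have hpother : ∀ C, Feasible Elim2' C → C ≠ {1, 2} →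
      prodScore Elim2' f C ≤ k * (3 * k) := by
    intro C hC hne
    have hkk : (0:ℝ) ≤ k * (3 * k) := by nlinarith
    rcases (feas2' C).1 hC with rfl | rfl | rfl | rfl | rfl | rfl | rfl
    · rw [psEq Elim2' rfl, a0', a1']; simpa [hz] using hkk
    · rw [psEq Elim2' rfl, a0', a1', show ({2} : Finset (Fin 3)) ∩ {0} = ∅ by decide, hz,
        mul_zero]; exact hkk
    · rw [psEq Elim2' rfl, a0', a1', show ({2} : Finset (Fin 3)) ∩ {1} = ∅ by decide, hz,
        mul_zero]; exact hkk
    · rw [psEq Elim2' rfl, a0', a1', show ({0,1} : Finset (Fin 3)) ∩ {2} = ∅ by decide, hz,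
        zero_mul]; exact hkk
    · rw [psEq Elim2' rfl, a0', a1', show ({2} : Finset (Fin 3)) ∩ {0,1} = ∅ by decide, hz,
        mul_zero]; exact hkk
    · rw [psEq Elim2' rfl, a0', a1', show ({0,1} : Finset (Fin 3)) ∩ {0,2} = {0} by decide,
        show ({2} : Finset (Fin 3)) ∩ {0,2} = {2} by decide, h0, h2]
    · exact absurd rfl hne
  refine ⟨⟨hfeas, ?_⟩, ?_, ⟨hfeas, ?_⟩, ?_⟩
  · intro C hC
    by_cases hne : C = {1, 2}
    · subst hne; exact le_refl _
    · exact le_trans (hother C hC hne) (by rw [hval]; linarith)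
  · rintro B ⟨hBf, hBopt⟩
    by_contra hne
    have hb := hBopt {1, 2} hfeas
    rw [hval] at hb
    have hc := hother B hBf hne
    linarith
  · intro C hC
    by_cases hne : C = {1, 2}
    · subst hne; exact le_refl _
    · exact le_trans (hpother C hC hne) (by rw [hpval]; nlinarith)
  · rintro B ⟨hBf, hBopt⟩
    by_contra hne
    have hb := hBopt {1, 2} hfeas
    rw [hpval] at hb
    have hc := hpother B hBf hne
    nlinarith

/-- For any utility function with `u(∅,E) = 0`, nonnegativity and cost consistency:
`{x₁, x₃}` is the unique min-optimal and the unique prod-optimal bundle of `E`; no project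
costs exactly `5`; the unique min-optimal and prod-optimal bundle of `E' = (A,V,c,5)` is
`{x₂, x₃}`, which does not contain `x₁`; consequently every budgeting method always
returning a min-optimal (or prod-optimal) feasible bundle violates limit monotonicity. -/
theorem min_prod_rules_violate_limit_monotonicity
    (u : Scenario (Fin 3) (Fin 2) → Finset (Fin 3) → ℝ)
    (hzero : ∀ E, u E ∅ = 0)
    (hnonneg : ∀ E S, 0 ≤ u E S)
    (hcc : ∀ E : Scenario (Fin 3) (Fin 2),
      ∃ k : ℝ, 0 < k ∧ ∀ a ∈ E.projects, u E {a} = k * E.cost a) :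
    (IsMinOptimal Elim2 (u Elim2) {0, 2} ∧
      (∀ B, IsMinOptimal Elim2 (u Elim2) B → B = {0, 2}) ∧
      IsProdOptimal Elim2 (u Elim2) {0, 2} ∧
      (∀ B, IsProdOptimal Elim2 (u Elim2) B → B = {0, 2})) ∧
    (∀ a ∈ Elim2.projects, Elim2.cost a ≠ 5) ∧
    (IsMinOptimal Elim2' (u Elim2') {1, 2} ∧
      (∀ B, IsMinOptimal Elim2' (u Elim2') B → B = {1, 2}) ∧
      IsProdOptimal Elim2' (u Elim2') {1, 2} ∧
      (∀ B, IsProdOptimal Elim2' (u Elim2') B → B = {1, 2}) ∧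
      (∀ B, IsMinOptimal Elim2' (u Elim2') B → (0 : Fin 3) ∉ B) ∧
      (∀ B, IsProdOptimal Elim2' (u Elim2') B → (0 : Fin 3) ∉ B)) ∧
    (∀ r : Scenario (Fin 3) (Fin 2) → Finset (Fin 3),
      (∀ F, IsMinOptimal F (u F) (r F)) → ¬ LimitMonotone r) ∧
    (∀ r : Scenario (Fin 3) (Fin 2) → Finset (Fin 3),
      (∀ F, IsProdOptimal F (u F) (r F)) → ¬ LimitMonotone r) := by
  obtain ⟨k, hk, hka⟩ := hcc Elim2
  obtain ⟨k', hk', hka'⟩ := hcc Elim2'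
  have h0 : u Elim2 {0} = k := by
    have := hka 0 (by decide); rw [this]; norm_num [Elim2]
  have h2 : u Elim2 {2} = 3 * k := by
    have := hka 2 (by decide); rw [this]; norm_num [Elim2]; simp [show (![1, 2, 3] : Fin 3 → ℕ) 2 = 3 from rfl]; ring
  have h0' : u Elim2' {0} = k' := by
    have := hka' 0 (by decide); rw [this]; norm_num [Elim2']
  have h1' : u Elim2' {1} = 2 * k' := by
    have := hka' 1 (by decide); rw [this]; norm_num [Elim2']; ring
  have h2' : u Elim2' {2} = 3 * k' := by
    have := hka' 2 (by decide); rw [this]; norm_num [Elim2']; simp [show (![1, 2, 3] : Fin 3 → ℕ) 2 = 3 from rfl]; ring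
  obtain ⟨hm, hmu, hp, hpu⟩ := elim2_block (u Elim2) (hzero _) (hnonneg _) k hk h0 h2
  obtain ⟨hm', hmu', hp', hpu'⟩ :=
    elim2'_block (u Elim2') (hzero _) (hnonneg _) k' hk' h0' h1' h2'
  have hcost : ∀ a ∈ Elim2.projects, Elim2.cost a ≠ 5 := by decide
  refine ⟨⟨hm, hmu, hp, hpu⟩, hcost, ⟨hm', hmu', hp', hpu',
    fun B hB => by rw [hmu' B hB]; decide, fun B hB => by rw [hpu' B hB]; decide⟩, ?_, ?_⟩
  · intro r hr hLM
    have hr1 : r Elim2 = {0, 2} := hmu _ (hr Elim2)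
    have hr2 : r Elim2' = {1, 2} := hmu' _ (hr Elim2')
    have hsub := hLM Elim2 Elim2' rfl rfl rfl rfl rfl hcost
    rw [hr1, hr2] at hsub
    exact (by decide : ¬ ({0, 2} : Finset (Fin 3)) ⊆ {1, 2}) hsub
  · intro r hr hLM
    have hr1 : r Elim2 = {0, 2} := hpu _ (hr Elim2)
    have hr2 : r Elim2' = {1, 2} := hpu' _ (hr Elim2')
    have hsub := hLM Elim2 Elim2' rfl rfl rfl rfl rfl hcost
    rw [hr1, hr2] at hsub
    exact (by decide : ¬ ({0, 2} : Finset (Fin 3)) ⊆ {1, 2}) hsub
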